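/- Let (M, d) be a compact metric space and μ a finite Borel measure on M with μ(M) > 0. Let G be a group of isometries of (M, d), each of which preserves μ, and assume G acts transitively on M. Let m ≥ 1 and let e_1, …, e_m : M → ℂ be continuous functions that are orthonormal in L²(μ), and whose span E is G-invariant. Then for every choice of coefficients c_1, …, c_m ∈ ℂ and every x ∈ M, the function u = ∑_{i=1}^m c_i e_i satisfies |u(x)| ≤ (m / μ(M))^{1/2} · (∑_{i=1}^m |c_i|²)^{1/2}; equivalently ‖u‖_{L^∞} ≤ (m/μ(M))^{1/2} ‖u‖_{L²(μ)}. -/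

import Mathlib

/-!
The function `Φ y = ∑ i, ‖e i y‖ ^ 2` does not depend on the choice of orthonormal basis of `E`.
For `g ∈ G` the family `e i ∘ g` is again an orthonormal basis of `E`, related to `e` by a unitary
matrix, so `Φ ∘ g = Φ`; by transitivity `Φ` is constant, and integrating gives `μ(M) Φ = m`.
Cauchy–Schwarz in `ℂ^m` then bounds `|∑ i, c i e i x|` by `(∑ |c i|²)^{1/2} Φ(x)^{1/2}`.
-/

open MeasureTheory Matrix ComplexConjugate

section

variable {𝕜 : Type*} [RCLike 𝕜] {ι : Type*}

theorem norm_sum_mul_le_sqrt_mul_sqrt [Fintype ι] (c v : ι → 𝕜) :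
    ‖∑ i, c i * v i‖ ≤ √(∑ i, ‖c i‖ ^ 2) * √(∑ i, ‖v i‖ ^ 2) := by
  calc ‖∑ i, c i * v i‖ ≤ ∑ i, ‖c i‖ * ‖v i‖ := (norm_sum_le _ _).trans_eq (by simp)
    _ ≤ √(∑ i, ‖c i‖ ^ 2) * √(∑ i, ‖v i‖ ^ 2) := Real.sum_mul_le_sqrt_mul_sqrt _ _ _

variable [DecidableEq ι]

theorem Matrix.sum_norm_sq_mulVec_of_mem_unitaryGroup [Fintype ι] {A : Matrix ι ι 𝕜}
    (hA : A ∈ unitaryGroup ι 𝕜) (v : ι → 𝕜) :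
    ∑ i, ‖(A *ᵥ v) i‖ ^ 2 = ∑ i, ‖v i‖ ^ 2 := by
  have hstar : ∀ w : ι → 𝕜, star w ⬝ᵥ w = ((∑ i, ‖w i‖ ^ 2 : ℝ) : 𝕜) := fun w => by
    simp [dotProduct, RCLike.conj_mul]
  have key : star (A *ᵥ v) ⬝ᵥ (A *ᵥ v) = star v ⬝ᵥ v := by
    rw [star_mulVec, ← dotProduct_mulVec, mulVec_mulVec, ← star_eq_conjTranspose,
      mem_unitaryGroup_iff'.mp hA, one_mulVec]
  exact_mod_cast (hstar _).symm.trans (key.trans (hstar v))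

variable {M N : Type*} [MeasurableSpace M] [MeasurableSpace N]

/-- Orthonormality in `L²(μ)`, written with the integrals themselves. -/
def L2Orthonormal (μ : Measure M) (e : ι → M → 𝕜) : Prop :=
  ∀ i j, ∫ x, e i x * conj (e j x) ∂μ = if i = j then 1 else 0

namespace L2Orthonormal

variable {μ : Measure M} {e : ι → M → 𝕜}

theorem integral_norm_sq (he : L2Orthonormal μ e) (i : ι) : ∫ x, ‖e i x‖ ^ 2 ∂μ = 1 := by
  have h : ((∫ x, ‖e i x‖ ^ 2 ∂μ : ℝ) : 𝕜) = 1 := by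
    rw [← integral_ofReal]
    simpa only [RCLike.mul_conj, if_pos, RCLike.ofReal_pow] using he i i
  exact_mod_cast h

theorem integrable_norm_sq (he : L2Orthonormal μ e) (i : ι) :
    Integrable (fun x => ‖e i x‖ ^ 2) μ :=
  Integrable.of_integral_ne_zero (by rw [he.integral_norm_sq]; exact one_ne_zero)

theorem memLp_two (he : L2Orthonormal μ e) (hmeas : ∀ i, AEStronglyMeasurable (e i) μ)
    (i : ι) : MemLp (e i) 2 μ :=
  (memLp_two_iff_integrable_sq_norm (hmeas i)).mpr (he.integrable_norm_sq i)

theorem integrable_mul_conj (he : L2Orthonormal μ e)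
    (hmeas : ∀ i, AEStronglyMeasurable (e i) μ) (i j : ι) :
    Integrable (fun x => e i x * conj (e j x)) μ :=
  (he.memLp_two hmeas i).integrable_mul (he.memLp_two hmeas j).star

theorem comp {ν : Measure N} {e : ι → N → 𝕜} (he : L2Orthonormal ν e) {φ : M → N}
    (hφ : MeasurePreserving φ μ ν) (hφe : MeasurableEmbedding φ) :
    L2Orthonormal μ fun i => e i ∘ φ := fun i j =>
  (hφ.integral_comp hφe fun y => e i y * conj (e j y)).trans (he i j)

variable [Fintype ι]

theorem integral_sum_mul_conj_sum (he : L2Orthonormal μ e)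
    (hmeas : ∀ i, AEStronglyMeasurable (e i) μ) (a b : ι → 𝕜) :
    ∫ x, (∑ k, a k * e k x) * conj (∑ l, b l * e l x) ∂μ = ∑ k, a k * conj (b k) := by
  have hexpand : ∀ x, (∑ k, a k * e k x) * conj (∑ l, b l * e l x)
      = ∑ k, ∑ l, a k * conj (b l) * (e k x * conj (e l x)) := fun x => by
    rw [map_sum, Finset.sum_mul_sum]
    refine Finset.sum_congr rfl fun k _ => Finset.sum_congr rfl fun l _ => ?_
    rw [map_mul]; ring
  simp_rw [hexpand]
  rw [integral_finsetSum _ fun k _ =>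
    integrable_finsetSum _ fun l _ => (he.integrable_mul_conj hmeas k l).const_mul _]
  refine Finset.sum_congr rfl fun k _ => ?_
  rw [integral_finsetSum _ fun l _ => (he.integrable_mul_conj hmeas k l).const_mul _]
  simp_rw [integral_const_mul, he k]
  simp

theorem mem_unitaryGroup (he : L2Orthonormal μ e)
    (hmeas : ∀ i, AEStronglyMeasurable (e i) μ) {f : ι → M → 𝕜} (hf : L2Orthonormal μ f)
    {A : Matrix ι ι 𝕜} (hfA : ∀ i x, f i x = (A *ᵥ fun j => e j x) i) :
    A ∈ unitaryGroup ι 𝕜 := by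
  refine mem_unitaryGroup_iff.mpr (ext fun i j => ?_)
  have h := hf i j
  simp_rw [hfA, mulVec, dotProduct, he.integral_sum_mul_conj_sum hmeas] at h
  simpa [Matrix.mul_apply, Matrix.one_apply] using h

theorem sum_norm_sq_comp_eq (he : L2Orthonormal μ e)
    (hmeas : ∀ i, AEStronglyMeasurable (e i) μ) {φ : M → M} (hφ : MeasurePreserving φ μ μ)
    (hφe : MeasurableEmbedding φ)
    (hspan : ∀ i, (fun x => e i (φ x)) ∈ Submodule.span 𝕜 (Set.range e)) (y : M) :
    ∑ i, ‖e i (φ y)‖ ^ 2 = ∑ i, ‖e i y‖ ^ 2 := by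
  choose A hA using fun i => (Submodule.mem_span_range_iff_exists_fun 𝕜).mp (hspan i)
  have hAe : ∀ i x, e i (φ x) = (Matrix.of A *ᵥ fun j => e j x) i := fun i x => by
    simp [← congrFun (hA i) x, Finset.sum_apply, mulVec, dotProduct]
  have hU := he.mem_unitaryGroup hmeas (he.comp hφ hφe) hAe
  simp_rw [hAe]
  exact sum_norm_sq_mulVec_of_mem_unitaryGroup hU _

theorem integral_sum_norm_sq (he : L2Orthonormal μ e) :
    ∫ x, ∑ i, ‖e i x‖ ^ 2 ∂μ = Fintype.card ι := by
  rw [integral_finsetSum _ fun i _ => he.integrable_norm_sq i]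
  simp [he.integral_norm_sq]

theorem sum_norm_sq_eq_card_div_of_forall_eq (he : L2Orthonormal μ e) {x : M}
    (hconst : ∀ y, ∑ i, ‖e i y‖ ^ 2 = ∑ i, ‖e i x‖ ^ 2) :
    ∑ i, ‖e i x‖ ^ 2 = Fintype.card ι / μ.real Set.univ := by
  have h := he.integral_sum_norm_sq
  simp_rw [hconst, integral_const, smul_eq_mul] at h
  rcases isEmpty_or_nonempty ι with hι | hι
  · simp
  -- `μ.real univ = 0` covers both `μ univ = 0` and `μ univ = ∞`
  have hμ : μ.real Set.univ ≠ 0 := fun h0 => by simp [h0, eq_comm] at h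
  rw [eq_div_iff hμ, mul_comm, h]

end L2Orthonormal

end

theorem sup_norm_bound_eigenspace_general {M : Type*} [MetricSpace M]
    [MeasurableSpace M] [BorelSpace M]
    (μ : Measure M)
    (G : Subgroup (M ≃ᵢ M))
    (hGmp : ∀ g ∈ G, MeasurePreserving (g : M → M) μ μ)
    (hGtrans : ∀ x y : M, ∃ g ∈ G, g x = y)
    (m : ℕ) (e : Fin m → M → ℂ)
    (he_cont : ∀ i, Continuous (e i))
    (he_orth : ∀ i j, ∫ x, e i x * (starRingEnd ℂ) (e j x) ∂μ = if i = j then 1 else 0)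
    (he_inv : ∀ g ∈ G, ∀ i, (fun x => e i (g x)) ∈ Submodule.span ℂ (Set.range e)) :
    ∀ (c : Fin m → ℂ) (x : M),
      ‖∑ i, c i * e i x‖ ≤
        Real.sqrt (m / (μ Set.univ).toReal) * Real.sqrt (∑ i, ‖c i‖ ^ 2) := by
  intro c x
  have he : L2Orthonormal μ e := he_orth
  have hmeas : ∀ i, AEStronglyMeasurable (e i) μ := fun i => (he_cont i).aestronglyMeasurable
  have hconst : ∀ y, ∑ i, ‖e i y‖ ^ 2 = ∑ i, ‖e i x‖ ^ 2 := fun y => by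
    obtain ⟨g, hg, rfl⟩ := hGtrans y x
    exact (he.sum_norm_sq_comp_eq hmeas (hGmp g hg) g.toHomeomorph.measurableEmbedding
      (he_inv g hg) y).symm
  have hx := he.sum_norm_sq_eq_card_div_of_forall_eq hconst
  rw [Fintype.card_fin, measureReal_def] at hx
  rw [mul_comm, ← hx]
  exact norm_sum_mul_le_sqrt_mul_sqrt c fun i => e i x

/-- Sup-norm bound for functions in an isometry-invariant orthonormal family:
`|∑ i, c i • e i x| ≤ √(m/μ(M)) · √(∑ |c i|²)`. -/
theorem sup_norm_bound_eigenspace {M : Type*} [MetricSpace M] [CompactSpace M]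
    [MeasurableSpace M] [BorelSpace M]
    (μ : Measure M) [IsFiniteMeasure μ] (hμpos : 0 < μ Set.univ)
    (G : Subgroup (M ≃ᵢ M))
    (hGmp : ∀ g ∈ G, MeasurePreserving (g : M → M) μ μ)
    (hGtrans : ∀ x y : M, ∃ g ∈ G, g x = y)
    (m : ℕ) (hm : 1 ≤ m) (e : Fin m → M → ℂ)
    (he_cont : ∀ i, Continuous (e i))
    (he_orth : ∀ i j, ∫ x, e i x * (starRingEnd ℂ) (e j x) ∂μ = if i = j then 1 else 0)
    (he_inv : ∀ g ∈ G, ∀ i, (fun x => e i (g x)) ∈ Submodule.span ℂ (Set.range e)) :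
    ∀ (c : Fin m → ℂ) (x : M),
      ‖∑ i, c i * e i x‖ ≤
        Real.sqrt (m / (μ Set.univ).toReal) * Real.sqrt (∑ i, ‖c i‖ ^ 2) :=
  sup_norm_bound_eigenspace_general μ G hGmp hGtrans m e he_cont he_orth he_inv
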